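/- Assume b = −e and b ≠ 0 (with a, d ∈ ℝ arbitrary). Let u be a solution of the Longstaff–Schwartz equation on Ω, and let ε ∈ ℝ. Then the function w(x,y,t) = (1 + bε·e^{bt})^{-2a} · exp( 2b²ε·e^{bt}·x/(1 + bε·e^{bt}) ) · u( x/(1 + bε·e^{bt}), y/(1 + bε·e^{bt}), t − ln(1 + bε·e^{bt})/b ) satisfies the Longstaff–Schwartz equation at every point (x,y,t) ∈ Ω with 1 + bε·e^{bt} > 0. -/

import Mathlib

/-- Partial derivative in `x`. -/
noncomputable def pdX (u : ℝ → ℝ → ℝ → ℝ) (x y t : ℝ) : ℝ := deriv (fun z => u z y t) x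

/-- Partial derivative in `y`. -/
noncomputable def pdY (u : ℝ → ℝ → ℝ → ℝ) (x y t : ℝ) : ℝ := deriv (fun z => u x z t) y

/-- Partial derivative in `t`. -/
noncomputable def pdT (u : ℝ → ℝ → ℝ → ℝ) (x y t : ℝ) : ℝ := deriv (fun z => u x y z) t

/-- Second partial derivative in `x`. -/
noncomputable def pdXX (u : ℝ → ℝ → ℝ → ℝ) (x y t : ℝ) : ℝ := deriv (fun z => pdX u z y t) x

/-- Second partial derivative in `y`. -/
noncomputable def pdYY (u : ℝ → ℝ → ℝ → ℝ) (x y t : ℝ) : ℝ := deriv (fun z => pdY u x z t) y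

/-- The domain `Ω = {(x,y,t) : x > 0, y > 0}`. -/
def Omega : Set (ℝ × ℝ × ℝ) := {p | 0 < p.1 ∧ 0 < p.2.1}

/-- The Longstaff–Schwartz (Kolmogorov backward) equation
`u_t = −((a−bx)·u_x + (d−ey)·u_y + (x/2)·u_xx + (y/2)·u_yy)` holds at the point `(x,y,t)`. -/
def LSEq (a b d e : ℝ) (u : ℝ → ℝ → ℝ → ℝ) (x y t : ℝ) : Prop :=
  pdT u x y t =
    -((a - b * x) * pdX u x y t + (d - e * y) * pdY u x y t +
      x / 2 * pdXX u x y t + y / 2 * pdYY u x y t)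

/-- `u` is a solution of the Longstaff–Schwartz equation on `Ω`: it is C² on `Ω` and
satisfies the equation at every point of `Ω`. -/
def IsLSSolution (a b d e : ℝ) (u : ℝ → ℝ → ℝ → ℝ) : Prop :=
  ContDiffOn ℝ 2 (fun p : ℝ × ℝ × ℝ => u p.1 p.2.1 p.2.2) Omega ∧
  ∀ x y t : ℝ, 0 < x → 0 < y → LSEq a b d e u x y t

/-!
The transformation belongs to the one-parameter group `G₁` of Lie point symmetries.
Write `A(t) = 1 + bε e^{bt}`, so that `A' = b (A - 1)` and `2b²ε e^{bt} = 2b (A - 1)`.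
The map `(x, y, t) ↦ (X, Y, s) = (x / A, y / A, t - log A / b)` has `ds/dt = 1 / A` and
`d(X, Y)/dt = -b (A - 1) / A · (X, Y)`, and the weight `A^{-2a} exp (2b (A - 1) x / A)`
satisfies `∂ₓ(weight) = 2b (A - 1) / A · weight`. By the chain rule every partial derivative
of `w` is the weight times a combination of the partial derivatives of `u` at `(X, Y, s)`;
substituting the equation for `u` there, the equation for `w` becomes, when `e = -b`, a
rational identity in `A`.
-/

open Real

abbrev uncurry3 (u : ℝ → ℝ → ℝ → ℝ) : ℝ × ℝ × ℝ → ℝ := fun p => u p.1 p.2.1 p.2.2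

lemma isOpen_omega : IsOpen Omega :=
  (isOpen_Ioi.preimage continuous_fst).inter
    (isOpen_Ioi.preimage (continuous_fst.comp continuous_snd))

section Partials

variable {u : ℝ → ℝ → ℝ → ℝ} {x y t : ℝ}

lemma pdX_eq_fderiv (hu : DifferentiableAt ℝ (uncurry3 u) (x, y, t)) :
    pdX u x y t = fderiv ℝ (uncurry3 u) (x, y, t) (1, 0, 0) :=
  (hu.hasFDerivAt.comp_hasDerivAt (x := x) (f := fun z => ((z, y, t) : ℝ × ℝ × ℝ))
    ((hasDerivAt_id x).prodMk (hasDerivAt_const x (y, t)))).deriv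

lemma pdY_eq_fderiv (hu : DifferentiableAt ℝ (uncurry3 u) (x, y, t)) :
    pdY u x y t = fderiv ℝ (uncurry3 u) (x, y, t) (0, 1, 0) :=
  (hu.hasFDerivAt.comp_hasDerivAt (x := y) (f := fun z => ((x, z, t) : ℝ × ℝ × ℝ))
    ((hasDerivAt_const y x).prodMk ((hasDerivAt_id y).prodMk (hasDerivAt_const y t)))).deriv

lemma pdT_eq_fderiv (hu : DifferentiableAt ℝ (uncurry3 u) (x, y, t)) :
    pdT u x y t = fderiv ℝ (uncurry3 u) (x, y, t) (0, 0, 1) :=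
  (hu.hasFDerivAt.comp_hasDerivAt (x := t) (f := fun z => ((x, y, z) : ℝ × ℝ × ℝ))
    ((hasDerivAt_const t x).prodMk ((hasDerivAt_const t y).prodMk (hasDerivAt_id t)))).deriv

lemma hasDerivAt_comp_curve {f g h : ℝ → ℝ} {f' g' h' τ : ℝ}
    (hu : DifferentiableAt ℝ (uncurry3 u) (f τ, g τ, h τ))
    (hf : HasDerivAt f f' τ) (hg : HasDerivAt g g' τ) (hh : HasDerivAt h h' τ) :
    HasDerivAt (fun σ => u (f σ) (g σ) (h σ))
      (f' * pdX u (f τ) (g τ) (h τ) + g' * pdY u (f τ) (g τ) (h τ) +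
        h' * pdT u (f τ) (g τ) (h τ)) τ := by
  have hv : ((f', g', h') : ℝ × ℝ × ℝ) = f' • (1, 0, 0) + g' • (0, 1, 0) + h' • (0, 0, 1) := by
    ext <;> simp
  have := hu.hasFDerivAt.comp_hasDerivAt τ (hf.prodMk (hg.prodMk hh))
  rwa [hv, map_add, map_add, map_smul, map_smul, map_smul, ← pdX_eq_fderiv hu,
    ← pdY_eq_fderiv hu, ← pdT_eq_fderiv hu] at this

lemma DifferentiableAt.hasDerivAt_pdX (hu : DifferentiableAt ℝ (uncurry3 u) (x, y, t)) :
    HasDerivAt (fun z => u z y t) (pdX u x y t) x :=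
  (hasDerivAt_comp_curve hu (hasDerivAt_id x) (hasDerivAt_const x y)
    (hasDerivAt_const x t)).congr_deriv (by simp)

lemma DifferentiableAt.hasDerivAt_pdY (hu : DifferentiableAt ℝ (uncurry3 u) (x, y, t)) :
    HasDerivAt (fun z => u x z t) (pdY u x y t) y :=
  (hasDerivAt_comp_curve hu (hasDerivAt_const y x) (hasDerivAt_id y)
    (hasDerivAt_const y t)).congr_deriv (by simp)

lemma differentiableAt_of_mem_omega (hu : ContDiffOn ℝ 2 (uncurry3 u) Omega)
    (hx : 0 < x) (hy : 0 < y) : DifferentiableAt ℝ (uncurry3 u) (x, y, t) :=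
  (hu.contDiffAt (isOpen_omega.mem_nhds ⟨hx, hy⟩)).differentiableAt two_ne_zero

lemma differentiableAt_fderiv_of_mem_omega (hu : ContDiffOn ℝ 2 (uncurry3 u) Omega)
    (hx : 0 < x) (hy : 0 < y) : DifferentiableAt ℝ (fderiv ℝ (uncurry3 u)) (x, y, t) :=
  ((hu.contDiffAt (isOpen_omega.mem_nhds ⟨hx, hy⟩)).fderiv_right one_add_one_eq_two.le)
    |>.differentiableAt one_ne_zero

lemma hasDerivAt_pdXX (hu : ContDiffOn ℝ 2 (uncurry3 u) Omega) (hx : 0 < x) (hy : 0 < y) :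
    HasDerivAt (fun z => pdX u z y t) (pdXX u x y t) x := by
  have hev : (fun z => fderiv ℝ (uncurry3 u) (z, y, t) (1, 0, 0)) =ᶠ[nhds x]
      fun z => pdX u z y t := by
    filter_upwards [Ioi_mem_nhds hx] with z hz
    exact (pdX_eq_fderiv (differentiableAt_of_mem_omega hu hz hy)).symm
  refine (DifferentiableAt.congr_of_eventuallyEq ?_ hev.symm).hasDerivAt
  exact ((differentiableAt_fderiv_of_mem_omega hu hx hy).comp x
    (differentiableAt_id.prodMk (differentiableAt_const _))).clm_apply (differentiableAt_const _)

lemma hasDerivAt_pdYY (hu : ContDiffOn ℝ 2 (uncurry3 u) Omega) (hx : 0 < x) (hy : 0 < y) :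
    HasDerivAt (fun z => pdY u x z t) (pdYY u x y t) y := by
  have hev : (fun z => fderiv ℝ (uncurry3 u) (x, z, t) (0, 1, 0)) =ᶠ[nhds y]
      fun z => pdY u x z t := by
    filter_upwards [Ioi_mem_nhds hy] with z hz
    exact (pdY_eq_fderiv (differentiableAt_of_mem_omega hu hx hz)).symm
  refine (DifferentiableAt.congr_of_eventuallyEq ?_ hev.symm).hasDerivAt
  exact ((differentiableAt_fderiv_of_mem_omega hu hx hy).comp y
    ((differentiableAt_const _).prodMk (differentiableAt_id.prodMk (differentiableAt_const _))))
    |>.clm_apply (differentiableAt_const _)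

end Partials

section Rescaling

variable {w g g' : ℝ → ℝ} {κ A x : ℝ}

lemma HasDerivAt.mul_comp_div {g₁ : ℝ} (hw : HasDerivAt w (κ * w x) x)
    (hg : HasDerivAt g g₁ (x / A)) :
    HasDerivAt (fun z => w z * g (z / A)) (w x * (κ * g (x / A) + g₁ / A)) x := by
  refine (hw.mul (hg.comp x ((hasDerivAt_id x).div_const A))).congr_deriv ?_
  simp only [Function.comp, id]
  ring

lemma deriv_deriv_mul_comp_div {g'' : ℝ} (hw : ∀ z, HasDerivAt w (κ * w z) z)
    (hA : 0 < A) (hx : 0 < x) (hg : ∀ z, 0 < z → HasDerivAt g (g' z) z)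
    (hg' : HasDerivAt g' g'' (x / A)) :
    deriv (fun z => deriv (fun v => w v * g (v / A)) z) x =
      w x * (κ * (κ * g (x / A) + g' (x / A) / A) + (κ * g' (x / A) + g'' / A) / A) := by
  have hev : (fun z => w z * (κ * g (z / A) + g' (z / A) / A)) =ᶠ[nhds x]
      fun z => deriv (fun v => w v * g (v / A)) z := by
    filter_upwards [Ioi_mem_nhds hx] with z hz
    exact ((hw z).mul_comp_div (hg _ (div_pos hz hA))).deriv.symm
  refine (HasDerivAt.congr_of_eventuallyEq ?_ hev.symm).deriv
  exact (hw x).mul_comp_div (((hg _ (div_pos hx hA)).const_mul κ).add (hg'.div_const A))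

end Rescaling

section Transform

variable {a b ε : ℝ} {u : ℝ → ℝ → ℝ → ℝ}

noncomputable def g1Scale (b ε t : ℝ) : ℝ := 1 + b * ε * exp (b * t)

noncomputable def g1Weight (a b ε x t : ℝ) : ℝ :=
  g1Scale b ε t ^ (-(2 * a)) * exp (2 * b * (g1Scale b ε t - 1) * x / g1Scale b ε t)

noncomputable def g1Transform (a b ε : ℝ) (u : ℝ → ℝ → ℝ → ℝ) (x y t : ℝ) : ℝ :=
  g1Weight a b ε x t *
    u (x / g1Scale b ε t) (y / g1Scale b ε t) (t - log (g1Scale b ε t) / b)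

lemma hasDerivAt_g1Scale (t : ℝ) : HasDerivAt (g1Scale b ε) (b * (g1Scale b ε t - 1)) t := by
  refine ((((hasDerivAt_id t).const_mul b).exp.const_mul (b * ε)).const_add 1).congr_deriv ?_
  simp only [g1Scale, id]
  ring

lemma hasDerivAt_g1Weight_x (x t : ℝ) :
    HasDerivAt (fun z => g1Weight a b ε z t)
      (2 * b * (g1Scale b ε t - 1) / g1Scale b ε t * g1Weight a b ε x t) x := by
  have := (((hasDerivAt_id x).const_mul (2 * b * (g1Scale b ε t - 1))).div_const
    (g1Scale b ε t)).exp.const_mul (g1Scale b ε t ^ (-(2 * a)))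
  refine this.congr_deriv ?_
  simp only [g1Weight, id]
  ring

lemma hasDerivAt_g1Weight_t {x t : ℝ} (hA : 0 < g1Scale b ε t) :
    HasDerivAt (fun τ => g1Weight a b ε x τ)
      (b * (g1Scale b ε t - 1) / g1Scale b ε t * (2 * b * x / g1Scale b ε t - 2 * a) *
        g1Weight a b ε x t) t := by
  have hS := hasDerivAt_g1Scale (b := b) (ε := ε) t
  have := (hS.rpow_const (p := -(2 * a)) (Or.inl hA.ne')).mul
    ((((hS.sub_const 1).const_mul (2 * b)).mul_const x).div hS hA.ne').exp
  refine this.congr_deriv ?_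
  simp only [g1Weight, Pi.div_apply, Real.rpow_sub hA, Real.rpow_one]
  field_simp
  ring

lemma hasDerivAt_div_g1Scale {x t : ℝ} (hA : 0 < g1Scale b ε t) :
    HasDerivAt (fun τ => x / g1Scale b ε τ)
      (-(b * (g1Scale b ε t - 1) / g1Scale b ε t) * (x / g1Scale b ε t)) t := by
  refine ((hasDerivAt_const t x).div (hasDerivAt_g1Scale t) hA.ne').congr_deriv ?_
  field_simp
  ring

lemma hasDerivAt_sub_log_g1Scale_div {t : ℝ} (hb : b ≠ 0) (hA : 0 < g1Scale b ε t) :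
    HasDerivAt (fun τ => τ - log (g1Scale b ε τ) / b) (1 / g1Scale b ε t) t := by
  refine ((hasDerivAt_id t).sub (((hasDerivAt_g1Scale t).log hA.ne').div_const b)).congr_deriv ?_
  field_simp
  ring

theorem lsEq_g1Transform {d : ℝ} (hb : b ≠ 0) (hu : IsLSSolution a b d (-b) u) {x y t : ℝ}
    (hx : 0 < x) (hy : 0 < y) (hA : 0 < g1Scale b ε t) :
    LSEq a b d (-b) (g1Transform a b ε u) x y t := by
  have hX : 0 < x / g1Scale b ε t := div_pos hx hA
  have hY : 0 < y / g1Scale b ε t := div_pos hy hA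
  have hdiff := differentiableAt_of_mem_omega (t := t - log (g1Scale b ε t) / b) hu.1 hX hY
  have hT : pdT (g1Transform a b ε u) x y t = _ :=
    ((hasDerivAt_g1Weight_t hA).mul (hasDerivAt_comp_curve hdiff (hasDerivAt_div_g1Scale hA)
      (hasDerivAt_div_g1Scale hA) (hasDerivAt_sub_log_g1Scale_div hb hA))).deriv
  have hX1 : pdX (g1Transform a b ε u) x y t = _ :=
    ((hasDerivAt_g1Weight_x x t).mul_comp_div hdiff.hasDerivAt_pdX).deriv
  have hX2 : pdXX (g1Transform a b ε u) x y t = _ :=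
    deriv_deriv_mul_comp_div (g := fun X => u X (y / g1Scale b ε t) (t - log (g1Scale b ε t) / b))
      (hasDerivAt_g1Weight_x · t) hA hx
      (fun z hz => (differentiableAt_of_mem_omega hu.1 hz hY).hasDerivAt_pdX)
      (hasDerivAt_pdXX hu.1 hX hY)
  have hconst : ∀ z, HasDerivAt (fun _ => g1Weight a b ε x t) (0 * g1Weight a b ε x t) z :=
    fun z => (hasDerivAt_const (𝕜 := ℝ) z _).congr_deriv (zero_mul _).symm
  have hY1 : pdY (g1Transform a b ε u) x y t = _ :=
    ((hconst y).mul_comp_div hdiff.hasDerivAt_pdY).deriv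
  have hY2 : pdYY (g1Transform a b ε u) x y t = _ :=
    deriv_deriv_mul_comp_div (g := fun Y => u (x / g1Scale b ε t) Y (t - log (g1Scale b ε t) / b))
      hconst hA hy
      (fun z hz => (differentiableAt_of_mem_omega hu.1 hX hz).hasDerivAt_pdY)
      (hasDerivAt_pdYY hu.1 hX hY)
  have hpde := hu.2 _ _ (t - log (g1Scale b ε t) / b) hX hY
  unfold LSEq at hpde ⊢
  rw [hT, hX1, hX2, hY1, hY2, hpde]
  generalize g1Scale b ε t = A at hA ⊢
  field_simp
  ring

end Transform

/-- Symmetry of the Longstaff–Schwartz equation when `b = −e ≠ 0` (subcase 2.3, group `G₁`). -/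
theorem ls_symmetry_b_eq_neg_e_G1 (a b d e : ℝ) (hbe : b = -e) (hb : b ≠ 0)
    (u : ℝ → ℝ → ℝ → ℝ) (hu : IsLSSolution a b d e u) (ε : ℝ) :
    ∀ x y t : ℝ, 0 < x → 0 < y → 1 + b * ε * Real.exp (b * t) > 0 →
      LSEq a b d e
        (fun x y t =>
          (1 + b * ε * Real.exp (b * t)) ^ (-(2 * a)) *
            Real.exp (2 * b ^ 2 * ε * Real.exp (b * t) * x /
              (1 + b * ε * Real.exp (b * t))) *
            u (x / (1 + b * ε * Real.exp (b * t))) (y / (1 + b * ε * Real.exp (b * t)))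
              (t - Real.log (1 + b * ε * Real.exp (b * t)) / b))
        x y t := by
  obtain rfl : e = -b := by rw [hbe, neg_neg]
  intro x y t hx hy hA
  convert lsEq_g1Transform hb hu hx hy hA using 2 with x'
  ext y' t'
  simp only [g1Transform, g1Weight, g1Scale, add_sub_cancel_left]
  ring_nf
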